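/- If the deviation vector norm grows linearly, ‖v_k‖ = ‖v₀‖(1 + αk) with α > 0 (regular orbit), then the MEGNO Y(n) = (2/n) Σ_{k=1}^n k·ln(‖v_k‖/‖v_{k-1}‖) converges to 2 as n → ∞. -/

import Mathlib

/-!
For `‖v_k‖ = c (1 + α k)` the ratio `‖v_{k+1}‖ / ‖v_k‖` is `1 + g`, with `g = α / (1 + α k)` and
`(k + 1) g → 1`, so `(k + 1) log (‖v_{k+1}‖ / ‖v_k‖) → 1` because `log (1 + g) ~ g`.
After reindexing, `Y(n)` is twice the Cesàro mean of these terms, hence tends to `2`.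
-/

open Filter Finset Real Topology

noncomputable def megno (r : ℕ → ℝ) (n : ℕ) : ℝ :=
  2 / n * ∑ k ∈ Icc 1 n, k * log (r k / r (k - 1))

theorem megno_eq_two_mul_inv_mul_sum_range (r : ℕ → ℝ) (n : ℕ) :
    megno r n = 2 * ((n : ℝ)⁻¹ * ∑ k ∈ range n, (k + 1) * log (r (k + 1) / r k)) := by
  rw [megno, ← Ico_add_one_right_eq_Icc, sum_Ico_eq_sum_range, div_eq_mul_inv, mul_assoc]
  simp only [Nat.add_sub_cancel, add_comm 1, Nat.cast_add, Nat.cast_one]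

theorem tendsto_megno {r : ℕ → ℝ} {L : ℝ}
    (h : Tendsto (fun k : ℕ => (k + 1 : ℝ) * log (r (k + 1) / r k)) atTop (𝓝 L)) :
    Tendsto (megno r) atTop (𝓝 (2 * L)) := by
  simpa only [← megno_eq_two_mul_inv_mul_sum_range] using h.cesaro.const_mul 2

theorem tendsto_succ_mul_log_div_of_linear {r : ℕ → ℝ} {c α : ℝ} (hc : c ≠ 0) (hα : 0 < α)
    (hr : ∀ k : ℕ, r k = c * (1 + α * k)) :
    Tendsto (fun k : ℕ => (k + 1 : ℝ) * log (r (k + 1) / r k)) atTop (𝓝 1) := by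
  have hincrement : Tendsto (fun n : ℕ => n * (α / (1 + α * (n - 1)))) atTop (𝓝 1) := by
    have hlim : Tendsto (fun n : ℕ => (1 + (1 - α) / α * (n : ℝ)⁻¹)⁻¹) atTop
        (𝓝 (1 + (1 - α) / α * 0)⁻¹) :=
      ((tendsto_inv_atTop_nhds_zero_nat.const_mul _).const_add 1).inv₀ (by simp)
    rw [mul_zero, add_zero, inv_one] at hlim
    refine hlim.congr' ?_
    filter_upwards [eventually_ne_atTop 0] with n hn
    have hn1 : (1 : ℝ) ≤ n := Nat.one_le_cast.mpr (Nat.one_le_iff_ne_zero.mpr hn)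
    have hden : 1 + α * (n - 1) ≠ 0 := by nlinarith
    field_simp
    rw [div_eq_one_iff_eq (by nlinarith)]
    ring
  refine ((tendsto_nat_mul_log_one_add_of_tendsto hincrement).comp
    (tendsto_add_atTop_nat 1)).congr fun k => ?_
  have hk : 1 + α * k ≠ 0 := by positivity
  rw [Function.comp_apply, hr, hr, mul_div_mul_left _ _ hc]
  push_cast
  rw [add_sub_cancel_right]
  congr 2
  field_simp
  ring

/-- For a regular orbit whose deviation vector norm grows linearly,
`‖v_k‖ = ‖v₀‖(1 + α k)` with `α > 0`, the MEGNO
`Y(n) = (2/n) Σ_{k=1}^n k · ln(‖v_k‖/‖v_{k-1}‖)` converges to `2` as `n → ∞`. -/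
theorem megno_regular_limit {E : Type*} [NormedAddCommGroup E]
    (v : ℕ → E) (hv0 : v 0 ≠ 0) (α : ℝ) (hα : 0 < α)
    (hlin : ∀ k : ℕ, ‖v k‖ = ‖v 0‖ * (1 + α * k))
    (Y : ℕ → ℝ)
    (hY : ∀ n, Y n = (2 / (n : ℝ)) * ∑ k ∈ Finset.Icc 1 n,
        (k : ℝ) * Real.log (‖v k‖ / ‖v (k-1)‖)) :
    Tendsto Y atTop (nhds 2) := by
  have hY_eq : Y = megno (fun k => ‖v k‖) := funext hY
  rw [hY_eq, ← mul_one 2]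
  exact tendsto_megno (tendsto_succ_mul_log_div_of_linear (norm_ne_zero_iff.mpr hv0) hα hlin)
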